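/- Let P1 and P2 be disjoint copies of the Petersen graph. In P1 let u1 and v1 be adjacent, with a1, a2 the neighbours of u1 other than v1 and b1, b2 the neighbours of v1 other than u1; in P2 let u2 and v2 be adjacent, with c1, c2 the neighbours of u2 other than v2 and d1, d2 the neighbours of v2 other than u2. Form the graph Z3 as follows: take the disjoint union of P1 − {u1,v1} and P2 − {u2,v2}; add a new vertex s and the edges b1s, sc1 and b2c2; and add pendant vertices t*, a1*, a2*, d1*, d2* with edges st*, a1a1*, a2a2*, d1d1*, d2d2*. Then Z3 admits no proper 3-edge-colouring. (That is, the (2,2,1)-pole Z3, obtained from the junction I∘I of two isochromatic 4-poles by subdividing one connecting edge and attaching a dangling edge at the new vertex, satisfies ρ(Z3) ≥ 1.) -/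

import Mathlib

/-- A proper 3-edge-colouring of a simple graph: a colour for every unordered pair,
such that distinct edges of the graph sharing a vertex receive distinct colours. -/
def IsProper3EdgeColoring {V : Type*} (G : SimpleGraph V) (c : Sym2 V → Fin 3) : Prop :=
  ∀ e₁ e₂ : Sym2 V, e₁ ∈ G.edgeSet → e₂ ∈ G.edgeSet → e₁ ≠ e₂ →
    (∃ v, v ∈ e₁ ∧ v ∈ e₂) → c e₁ ≠ c e₂

/-- A graph admits a proper 3-edge-colouring. -/
def ThreeEdgeColorable {V : Type*} (G : SimpleGraph V) : Prop :=
  ∃ c : Sym2 V → Fin 3, IsProper3EdgeColoring G c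

/-- The vertices of the Petersen graph: the 2-element subsets of a 5-element set. -/
abbrev PetersenVert : Type := {s : Finset (Fin 5) // s.card = 2}

/-- The Petersen graph, as the Kneser graph of 2-element subsets of a 5-element set:
two subsets are adjacent when they are disjoint. -/
def petersen : SimpleGraph PetersenVert where
  Adj a b := Disjoint (a : Finset (Fin 5)) (b : Finset (Fin 5))
  symm := ⟨fun _ _ h => h.symm⟩
  loopless := by
    constructor
    intro a h
    have := disjoint_self.mp h
    have h2 := a.2
    rw [this] at h2
    simp at h2

/-- The (2,2,1)-pole `Z3`: two copies of the Petersen graph, each with an adjacent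
pair of vertices (`u1, v1` resp. `u2, v2`) removed; a new vertex `s` (index `0` of
`Fin 6`) is joined to `b1` and `c1`, the edge `b2c2` is added, and pendant vertices
(indices `1,…,5` of `Fin 6`) are attached at `s, a1, a2, d1, d2`. -/
def poleZ3 (u1 v1 a1 a2 b1 b2 u2 v2 c1 c2 d1 d2 : PetersenVert) :
    SimpleGraph ({x : PetersenVert // x ≠ u1 ∧ x ≠ v1} ⊕
      ({x : PetersenVert // x ≠ u2 ∧ x ≠ v2} ⊕ Fin 6)) :=
  SimpleGraph.fromRel (fun p q =>
    match p, q with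
    | Sum.inl x, Sum.inl y => petersen.Adj x.1 y.1
    | Sum.inr (Sum.inl x), Sum.inr (Sum.inl y) => petersen.Adj x.1 y.1
    | Sum.inl x, Sum.inr (Sum.inl y) => x.1 = b2 ∧ y.1 = c2
    | Sum.inl x, Sum.inr (Sum.inr k) =>
        (k = 0 ∧ x.1 = b1) ∨ (k = 2 ∧ x.1 = a1) ∨ (k = 3 ∧ x.1 = a2)
    | Sum.inr (Sum.inl y), Sum.inr (Sum.inr k) =>
        (k = 0 ∧ y.1 = c1) ∨ (k = 4 ∧ y.1 = d1) ∨ (k = 5 ∧ y.1 = d2)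
    | Sum.inr (Sum.inr k), Sum.inr (Sum.inr l) => k = 0 ∧ l = 1
    | _, _ => False)

/-!
Deleting two adjacent vertices `u`, `v` from the Petersen graph leaves an isochromatic 4-pole:
in every 3-edge-colouring, the colour missing at one neighbour `b₁` of `v` is also missing at
the other neighbour `b₂`. An exhaustive search proves this for one labelled copy, and the action
of `S₅` on the Petersen graph carries that copy onto every other. In `Z3` the first copy then
forces `b1s` and `b2c2` to share a colour, and the second copy, read with `u2` and `v2`
exchanged, forces `c1s` and `c2b2` to share a colour; so the two edges `b1s` and `c1s` at `s`
get the same colour.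
-/

section EdgeColoring

variable {V W : Type*} {G : SimpleGraph V} {H : SimpleGraph W} {c : Sym2 W → Fin 3}

theorem IsProper3EdgeColoring.comap (hc : IsProper3EdgeColoring H c) (f : G →g H)
    (hf : Function.Injective f) : IsProper3EdgeColoring G (c ∘ Sym2.map f) := by
  rintro e₁ e₂ h₁ h₂ hne ⟨v, hv₁, hv₂⟩
  exact hc _ _ (f.map_mem_edgeSet h₁) (f.map_mem_edgeSet h₂) ((Sym2.map.injective hf).ne hne)
    ⟨f v, Sym2.mem_map.2 ⟨v, hv₁, rfl⟩, Sym2.mem_map.2 ⟨v, hv₂, rfl⟩⟩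

theorem IsProper3EdgeColoring.apply_ne_of_adj (hc : IsProper3EdgeColoring H c) {v w₁ w₂ : W}
    (h₁ : H.Adj v w₁) (h₂ : H.Adj v w₂) (hw : w₁ ≠ w₂) : c s(v, w₁) ≠ c s(v, w₂) :=
  hc _ _ h₁ h₂ (fun h => hw (Sym2.congr_right.1 h))
    ⟨v, Sym2.mem_mk_left _ _, Sym2.mem_mk_left _ _⟩

theorem SimpleGraph.Hom.image_incidenceSet_subset (f : G →g H) (v : V) :
    Sym2.map f '' G.incidenceSet v ⊆ H.incidenceSet (f v) := by
  rintro _ ⟨e, ⟨he, hv⟩, rfl⟩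
  exact ⟨f.map_mem_edgeSet he, Sym2.mem_map.2 ⟨v, hv, rfl⟩⟩

theorem IsProper3EdgeColoring.apply_notMem_image_incidenceSet (hc : IsProper3EdgeColoring H c)
    (f : G →g H) {v : V} {w : W} (hvw : H.Adj (f v) w) (hw : w ∉ Set.range f) :
    c s(f v, w) ∉ (c ∘ Sym2.map f) '' G.incidenceSet v := by
  rintro ⟨e, ⟨he, hve⟩, hce⟩
  refine hc _ _ (f.map_mem_edgeSet he) hvw ?_ ⟨f v, Sym2.mem_map.2 ⟨v, hve, rfl⟩,
    Sym2.mem_mk_left _ _⟩ hce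
  intro heq
  obtain ⟨a, -, rfl⟩ := Sym2.mem_map.1 (heq ▸ Sym2.mem_mk_right (f v) w)
  exact hw ⟨a, rfl⟩

end EdgeColoring

section ColorSearch

variable {α : Type*} (r : α → α → Bool)

/-- Backtracking search for a colouring of the items of a list, extending `done`, in which
`r`-related items get different colours. -/
def colorSearch : List α → List (α × Fin 3) → Bool
  | [], _ => true
  | a :: rest, done => (List.finRange 3).any fun k =>
      done.all (fun p => !r a p.1 || p.2 != k) && colorSearch rest ((a, k) :: done)

theorem colorSearch_eq_true_of_extends {L : List α} {f : α → Fin 3}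
    (hf : ∀ a ∈ L, ∀ b ∈ L, r a b → f a ≠ f b) :
    ∀ rest done, rest ⊆ L → (∀ p ∈ done, p.1 ∈ L ∧ f p.1 = p.2) →
      colorSearch r rest done = true := by
  intro rest
  induction rest with
  | nil => intro _ _ _; rfl
  | cons a rest ih =>
    intro done hsub hdone
    have ha : a ∈ L := hsub List.mem_cons_self
    simp only [colorSearch, List.any_eq_true, Bool.and_eq_true, List.all_eq_true]
    refine ⟨f a, List.mem_finRange _, fun p hp => ?_, ih _ (List.cons_subset.1 hsub).2 ?_⟩
    · obtain ⟨hpL, hfp⟩ := hdone p hp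
      cases hr : r a p.1
      · rfl
      · simpa [← hfp] using (hf a ha p.1 hpL hr).symm
    · rintro p (_ | ⟨_, hp⟩)
      · exact ⟨ha, rfl⟩
      · exact hdone p hp

theorem colorSearch_eq_true {L : List α} {f : α → Fin 3}
    (hf : ∀ a ∈ L, ∀ b ∈ L, r a b → f a ≠ f b) : colorSearch r L [] = true :=
  colorSearch_eq_true_of_extends r hf L [] (List.Subset.refl L) (by simp)

end ColorSearch

instance : DecidableRel petersen.Adj := fun a b => inferInstanceAs (Decidable (Disjoint a.1 b.1))

def petersenPerm (σ : Equiv.Perm (Fin 5)) : petersen ≃g petersen where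
  toFun x := ⟨x.1.map σ.toEmbedding, by rw [Finset.card_map, x.2]⟩
  invFun x := ⟨x.1.map σ.symm.toEmbedding, by rw [Finset.card_map, x.2]⟩
  left_inv x := Subtype.ext (by simp [Finset.map_map])
  right_inv x := Subtype.ext (by simp [Finset.map_map])
  map_rel_iff' := Finset.disjoint_map _

@[simp]
theorem petersenPerm_apply_coe (σ : Equiv.Perm (Fin 5)) (x : PetersenVert) :
    (petersenPerm σ x : Finset (Fin 5)) = x.1.map σ.toEmbedding :=
  rfl

theorem petersen_not_adj_of_adj_of_adj {v b₁ b₂ : PetersenVert} :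
    petersen.Adj v b₁ → petersen.Adj v b₂ → ¬ petersen.Adj b₁ b₂ := by
  revert v b₁ b₂; decide

theorem exists_eq_pair_of_mem (b : PetersenVert) {w : Fin 5} :
    w ∈ b.1 → ∃ i, i ≠ w ∧ b.1 = {w, i} := by
  revert b w; decide

theorem injective_and_eq_pair_of_disjoint : ∀ i j k l w : Fin 5,
    i ≠ w ∧ j ≠ w ∧ i ≠ j ∧ k ≠ l ∧ Disjoint ({k, l} : Finset (Fin 5)) {w, i} ∧
      Disjoint ({k, l} : Finset (Fin 5)) {w, j} → Function.Injective ![i, j, k, l, w] ∧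
      ∀ u : PetersenVert, Disjoint u.1 {k, l} ∧ u.1 ≠ {w, i} ∧ u.1 ≠ {w, j} → u.1 = {i, j} := by
  decide

def canonicalU : PetersenVert := ⟨{0, 1}, rfl⟩

def canonicalV : PetersenVert := ⟨{2, 3}, rfl⟩

/-- With `canonicalU = {0, 1}` and `canonicalV = {2, 3}` deleted, indices `0, 1` label the
neighbours of `canonicalV` and `2, 3` those of `canonicalU`. -/
def canonicalVert : Fin 8 → PetersenVert :=
  ![⟨{0, 4}, rfl⟩, ⟨{1, 4}, rfl⟩, ⟨{2, 4}, rfl⟩, ⟨{3, 4}, rfl⟩,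
    ⟨{0, 2}, rfl⟩, ⟨{0, 3}, rfl⟩, ⟨{1, 2}, rfl⟩, ⟨{1, 3}, rfl⟩]

theorem exists_petersenPerm {u v b₁ b₂ : PetersenVert} (huv : petersen.Adj u v)
    (hb₁ : petersen.Adj v b₁) (hb₂ : petersen.Adj v b₂) (hb : b₁ ≠ b₂) (hb₁u : b₁ ≠ u)
    (hb₂u : b₂ ≠ u) :
    ∃ σ, petersenPerm σ canonicalU = u ∧ petersenPerm σ canonicalV = v ∧
      petersenPerm σ (canonicalVert 0) = b₁ ∧ petersenPerm σ (canonicalVert 1) = b₂ := by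
  obtain ⟨w, hw₁, hw₂⟩ := Finset.not_disjoint_iff.1 (petersen_not_adj_of_adj_of_adj hb₁ hb₂)
  obtain ⟨i, hiw, hi⟩ := exists_eq_pair_of_mem b₁ hw₁
  obtain ⟨j, hjw, hj⟩ := exists_eq_pair_of_mem b₂ hw₂
  obtain ⟨k, l, hkl, hkl'⟩ := Finset.card_eq_two.1 v.2
  have hij : i ≠ j := by
    rintro rfl
    exact hb (Subtype.ext (hi.trans hj.symm))
  change Disjoint v.1 b₁.1 at hb₁
  change Disjoint v.1 b₂.1 at hb₂
  rw [hkl', hi] at hb₁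
  rw [hkl', hj] at hb₂
  obtain ⟨ht, hu⟩ :=
    injective_and_eq_pair_of_disjoint i j k l w ⟨hiw, hjw, hij, hkl, hb₁, hb₂⟩
  have hu := hu u ⟨hkl' ▸ huv, fun h => hb₁u (Subtype.ext (hi.trans h.symm)),
    fun h => hb₂u (Subtype.ext (hj.trans h.symm))⟩
  refine ⟨Equiv.ofBijective _ ht.bijective_of_finite, ?_, ?_, ?_, ?_⟩ <;> apply Subtype.ext <;>
    simp [canonicalU, canonicalV, canonicalVert, hu, hkl', hi, hj, Finset.pair_comm]

def canonicalCore : SimpleGraph (Fin 8) := petersen.comap canonicalVert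

instance : DecidableRel canonicalCore.Adj := fun i j =>
  inferInstanceAs (Decidable (petersen.Adj (canonicalVert i) (canonicalVert j)))

def canonicalEdges : List (Sym2 (Fin 8)) :=
  [s(0, 6), s(0, 7), s(1, 4), s(1, 5), s(2, 5), s(2, 7), s(3, 4), s(3, 6), s(4, 7), s(5, 6)]

theorem canonicalEdges_mem_edgeSet : ∀ e ∈ canonicalEdges, e ∈ canonicalCore.edgeSet := by decide

/-- Besides the edges, an item `inr v` stands for a colour missing at `v`: it conflicts with the
edges at `v`, and two such items conflict with each other. -/
def canonicalConflict : Sym2 (Fin 8) ⊕ Fin 8 → Sym2 (Fin 8) ⊕ Fin 8 → Bool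
  | .inl e, .inl e' => decide (e ≠ e' ∧ ∃ v, v ∈ e ∧ v ∈ e')
  | .inl e, .inr k | .inr k, .inl e => decide (k ∈ e)
  | .inr k, .inr l => decide (k ≠ l)

def canonicalItems : List (Sym2 (Fin 8) ⊕ Fin 8) := canonicalEdges.map .inl ++ [.inr 0, .inr 1]

theorem colorSearch_canonicalItems : colorSearch canonicalConflict canonicalItems [] = false := by
  decide

theorem canonicalCore_isochromatic {c : Sym2 (Fin 8) → Fin 3}
    (hc : IsProper3EdgeColoring canonicalCore c) {x y : Fin 3}
    (hx : x ∉ c '' canonicalCore.incidenceSet 0) (hy : y ∉ c '' canonicalCore.incidenceSet 1) :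
    x = y := by
  by_contra hxy
  refine absurd (colorSearch_eq_true canonicalConflict (L := canonicalItems)
    (f := Sum.elim c fun v => if v = 0 then x else y) ?_) (by simp [colorSearch_canonicalItems])
  intro a ha b hb h
  simp only [canonicalItems, List.mem_append, List.mem_map, List.mem_cons, List.not_mem_nil,
    or_false] at ha hb
  rcases ha with ⟨e, he, rfl⟩ | rfl | rfl <;> rcases hb with ⟨e', he', rfl⟩ | rfl | rfl <;>
    simp only [canonicalConflict, decide_eq_true_eq] at h <;>
    simp only [Sum.elim_inl, Sum.elim_inr, if_pos, Fin.reduceEq, if_false, ne_eq]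
  · exact hc e e' (canonicalEdges_mem_edgeSet e he) (canonicalEdges_mem_edgeSet e' he') h.1 h.2
  · exact fun h' => hx ⟨e, ⟨canonicalEdges_mem_edgeSet e he, h⟩, h'⟩
  · exact fun h' => hy ⟨e, ⟨canonicalEdges_mem_edgeSet e he, h⟩, h'⟩
  · exact fun h' => hx ⟨e', ⟨canonicalEdges_mem_edgeSet e' he', h⟩, h'.symm⟩
  · exact absurd rfl h
  · exact hxy
  · exact fun h' => hy ⟨e', ⟨canonicalEdges_mem_edgeSet e' he', h⟩, h'.symm⟩
  · exact fun h' => hxy h'.symm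
  · exact absurd rfl h

def petersenCore (u v : PetersenVert) : SimpleGraph {x : PetersenVert // x ≠ u ∧ x ≠ v} :=
  petersen.comap Subtype.val

theorem canonicalVert_injective : Function.Injective canonicalVert := by decide

theorem canonicalVert_ne (i : Fin 8) :
    canonicalVert i ≠ canonicalU ∧ canonicalVert i ≠ canonicalV := by
  revert i; decide

theorem petersenCore_isochromatic {u v b₁ b₂ : PetersenVert} (huv : petersen.Adj u v)
    (hb₁ : petersen.Adj v b₁) (hb₂ : petersen.Adj v b₂) (hb : b₁ ≠ b₂) (hb₁u : b₁ ≠ u)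
    (hb₂u : b₂ ≠ u) {c : Sym2 {x : PetersenVert // x ≠ u ∧ x ≠ v} → Fin 3}
    (hc : IsProper3EdgeColoring (petersenCore u v) c) {x y : Fin 3}
    (hx : x ∉ c '' (petersenCore u v).incidenceSet ⟨b₁, hb₁u, hb₁.ne'⟩)
    (hy : y ∉ c '' (petersenCore u v).incidenceSet ⟨b₂, hb₂u, hb₂.ne'⟩) : x = y := by
  obtain ⟨σ, hσu, hσv, hσ₁, hσ₂⟩ := exists_petersenPerm huv hb₁ hb₂ hb hb₁u hb₂u
  let f : canonicalCore →g petersenCore u v :=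
    { toFun i := ⟨petersenPerm σ (canonicalVert i),
        hσu ▸ (petersenPerm σ).injective.ne (canonicalVert_ne i).1,
        hσv ▸ (petersenPerm σ).injective.ne (canonicalVert_ne i).2⟩
      map_rel' := (petersenPerm σ).map_adj_iff.2 }
  have hf : Function.Injective f := fun i j h =>
    canonicalVert_injective ((petersenPerm σ).injective (congrArg Subtype.val h))
  have hf₁ : f 0 = ⟨b₁, hb₁u, hb₁.ne'⟩ := Subtype.ext hσ₁
  have hf₂ : f 1 = ⟨b₂, hb₂u, hb₂.ne'⟩ := Subtype.ext hσ₂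
  refine canonicalCore_isochromatic (hc.comap f hf) (fun h => hx ?_) (fun h => hy ?_)
  · rw [Set.image_comp] at h
    exact hf₁ ▸ Set.image_mono (f.image_incidenceSet_subset 0) h
  · rw [Set.image_comp] at h
    exact hf₂ ▸ Set.image_mono (f.image_incidenceSet_subset 1) h

section PoleZ3

variable {u1 v1 a1 a2 b1 b2 u2 v2 c1 c2 d1 d2 : PetersenVert}

@[simps]
def poleZ3LeftHom :
    petersenCore u1 v1 →g poleZ3 u1 v1 a1 a2 b1 b2 u2 v2 c1 c2 d1 d2 where
  toFun := Sum.inl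
  map_rel' h := ⟨fun e => petersen.ne_of_adj h (by rw [Sum.inl_injective e]), Or.inl h⟩

@[simps]
def poleZ3RightHom :
    petersenCore v2 u2 →g poleZ3 u1 v1 a1 a2 b1 b2 u2 v2 c1 c2 d1 d2 where
  toFun x := Sum.inr (Sum.inl ⟨x.1, x.2.symm⟩)
  map_rel' h := ⟨fun e => petersen.ne_of_adj h (by simpa using e), Or.inl h⟩

theorem poleZ3RightHom_injective :
    Function.Injective
      (poleZ3RightHom : petersenCore v2 u2 →g poleZ3 u1 v1 a1 a2 b1 b2 u2 v2 c1 c2 d1 d2) := by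
  intro x y h
  simpa [Subtype.ext_iff] using h

theorem poleZ3_adj_b1_s (h : b1 ≠ u1 ∧ b1 ≠ v1) :
    (poleZ3 u1 v1 a1 a2 b1 b2 u2 v2 c1 c2 d1 d2).Adj (.inl ⟨b1, h⟩) (.inr (.inr 0)) := by
  simp [poleZ3]

theorem poleZ3_adj_b2_c2 (h : b2 ≠ u1 ∧ b2 ≠ v1) (h' : c2 ≠ u2 ∧ c2 ≠ v2) :
    (poleZ3 u1 v1 a1 a2 b1 b2 u2 v2 c1 c2 d1 d2).Adj (.inl ⟨b2, h⟩) (.inr (.inl ⟨c2, h'⟩)) := by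
  simp [poleZ3]

theorem poleZ3_adj_c1_s (h : c1 ≠ u2 ∧ c1 ≠ v2) :
    (poleZ3 u1 v1 a1 a2 b1 b2 u2 v2 c1 c2 d1 d2).Adj (.inr (.inl ⟨c1, h⟩)) (.inr (.inr 0)) := by
  simp [poleZ3]

end PoleZ3

theorem poleZ3_uncolourable_general (u1 v1 a1 a2 b1 b2 u2 v2 c1 c2 d1 d2 : PetersenVert)
    (huv1 : petersen.Adj u1 v1)
    (hb1 : petersen.Adj v1 b1) (hb2 : petersen.Adj v1 b2)
    (hb12 : b1 ≠ b2) (hb1u : b1 ≠ u1) (hb2u : b2 ≠ u1)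
    (huv2 : petersen.Adj u2 v2)
    (hc1 : petersen.Adj u2 c1) (hc2 : petersen.Adj u2 c2)
    (hc12 : c1 ≠ c2) (hc1v : c1 ≠ v2) (hc2v : c2 ≠ v2) :
    ¬ ThreeEdgeColorable (poleZ3 u1 v1 a1 a2 b1 b2 u2 v2 c1 c2 d1 d2) := by
  rintro ⟨c, hc⟩
  have hleft : c s(.inl ⟨b1, hb1u, hb1.ne'⟩, .inr (.inr 0)) =
      c s(.inl ⟨b2, hb2u, hb2.ne'⟩, .inr (.inl ⟨c2, hc2.ne', hc2v⟩)) :=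
    petersenCore_isochromatic huv1 hb1 hb2 hb12 hb1u hb2u
      (hc.comap poleZ3LeftHom Sum.inl_injective)
      (hc.apply_notMem_image_incidenceSet poleZ3LeftHom (poleZ3_adj_b1_s _) (by simp))
      (hc.apply_notMem_image_incidenceSet poleZ3LeftHom (poleZ3_adj_b2_c2 _ _) (by simp))
  have hright : c s(.inr (.inl ⟨c1, hc1.ne', hc1v⟩), .inr (.inr 0)) =
      c s(.inl ⟨b2, hb2u, hb2.ne'⟩, .inr (.inl ⟨c2, hc2.ne', hc2v⟩)) :=
    (petersenCore_isochromatic huv2.symm hc1 hc2 hc12 hc1v hc2v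
      (hc.comap poleZ3RightHom poleZ3RightHom_injective)
      (hc.apply_notMem_image_incidenceSet poleZ3RightHom (poleZ3_adj_c1_s _) (by simp))
      (hc.apply_notMem_image_incidenceSet poleZ3RightHom (poleZ3_adj_b2_c2 _ _).symm
        (by simp))).trans (congrArg c Sym2.eq_swap)
  refine hc.apply_ne_of_adj (poleZ3_adj_b1_s ⟨hb1u, hb1.ne'⟩).symm
    (poleZ3_adj_c1_s ⟨hc1.ne', hc1v⟩).symm (by simp) ?_
  rw [Sym2.eq_swap, hleft, ← hright, Sym2.eq_swap]

/-- The (2,2,1)-pole `Z3`, obtained from the junction `I ∘ I` of two isochromatic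
4-poles by subdividing one connecting edge and attaching a dangling edge at the new
vertex, admits no proper 3-edge-colouring. -/
theorem poleZ3_uncolourable (u1 v1 a1 a2 b1 b2 u2 v2 c1 c2 d1 d2 : PetersenVert)
    (huv1 : petersen.Adj u1 v1)
    (ha1 : petersen.Adj u1 a1) (ha2 : petersen.Adj u1 a2)
    (ha12 : a1 ≠ a2) (ha1v : a1 ≠ v1) (ha2v : a2 ≠ v1)
    (hb1 : petersen.Adj v1 b1) (hb2 : petersen.Adj v1 b2)
    (hb12 : b1 ≠ b2) (hb1u : b1 ≠ u1) (hb2u : b2 ≠ u1)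
    (huv2 : petersen.Adj u2 v2)
    (hc1 : petersen.Adj u2 c1) (hc2 : petersen.Adj u2 c2)
    (hc12 : c1 ≠ c2) (hc1v : c1 ≠ v2) (hc2v : c2 ≠ v2)
    (hd1 : petersen.Adj v2 d1) (hd2 : petersen.Adj v2 d2)
    (hd12 : d1 ≠ d2) (hd1u : d1 ≠ u2) (hd2u : d2 ≠ u2) :
    ¬ ThreeEdgeColorable (poleZ3 u1 v1 a1 a2 b1 b2 u2 v2 c1 c2 d1 d2) :=
  poleZ3_uncolourable_general u1 v1 a1 a2 b1 b2 u2 v2 c1 c2 d1 d2 huv1 hb1 hb2 hb12 hb1u hb2u huv2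
    hc1 hc2 hc12 hc1v hc2v
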